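/- arXiv:1712.09798 — 2 statements merged into one kernel-verified Lean document; each statement's English description precedes it below -/
import Mathlib

section
/- If M is a d×d complex matrix with det(M) = 1, then |Tr(M) − d| ≤ (2^d + d!) · ‖M − I‖², where ‖·‖ is the operator norm. -/
/-!
Write the eigenvalues of `M` as `1 + μᵢ`. Each `μᵢ` lies in the spectrum of `M - 1`, so
`‖μᵢ‖ ≤ ε := ‖M - 1‖`, while `Tr M - d = ∑ μᵢ` and `det M = ∏ (1 + μᵢ) = 1`.
Expanding the product, `∑ μᵢ = -(∏ (1 + μᵢ) - 1 - ∑ μᵢ)` is a sum of monomials of degree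
at least two in the `μᵢ`, which is `O(ε²)` when `ε ≤ 1`; when `ε > 1` the trivial bound
`d ε ≤ 2ᵈ ε²` suffices.
-/

open Matrix
open scoped Matrix.Norms.L2Operator

section OneAddProd

variable {R : Type*} [NormedCommRing R] [NormOneClass R] {ε : ℝ}

theorem norm_prod_one_add_sub_one_le (hε₀ : 0 ≤ ε) (hε₁ : ε ≤ 1) (t : Multiset R)
    (ht : ∀ μ ∈ t, ‖μ‖ ≤ ε) :
    ‖(t.map (1 + ·)).prod - 1‖ ≤ (2 ^ Multiset.card t - 1) * ε := by
  induction t using Multiset.induction_on with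
  | empty => simp
  | cons a s ih =>
    have ha : ‖a‖ ≤ ε := ht a (Multiset.mem_cons_self a s)
    have hs := ih fun μ hμ => ht μ (Multiset.mem_cons_of_mem hμ)
    set P := (s.map (1 + ·)).prod
    have hpow : (1 : ℝ) ≤ 2 ^ Multiset.card s := one_le_pow₀ one_le_two
    have hP : ‖P‖ ≤ 2 ^ Multiset.card s := by
      have := norm_le_norm_sub_add P 1
      rw [norm_one] at this
      nlinarith
    rw [Multiset.map_cons, Multiset.prod_cons, Multiset.card_cons, pow_succ,
      show (1 + a) * P - 1 = (P - 1) + a * P by ring]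
    calc ‖(P - 1) + a * P‖ ≤ ‖P - 1‖ + ‖a‖ * ‖P‖ :=
          norm_add_le_of_le le_rfl (norm_mul_le _ _)
      _ ≤ (2 ^ Multiset.card s - 1) * ε + ε * 2 ^ Multiset.card s := by gcongr
      _ = (2 ^ Multiset.card s * 2 - 1) * ε := by ring

theorem norm_prod_one_add_sub_one_sub_sum_le (hε₀ : 0 ≤ ε) (hε₁ : ε ≤ 1) (t : Multiset R)
    (ht : ∀ μ ∈ t, ‖μ‖ ≤ ε) :
    ‖(t.map (1 + ·)).prod - 1 - t.sum‖ ≤ (2 ^ Multiset.card t - 1) * ε ^ 2 := by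
  induction t using Multiset.induction_on with
  | empty => simp
  | cons a s ih =>
    have hs' : ∀ μ ∈ s, ‖μ‖ ≤ ε := fun μ hμ => ht μ (Multiset.mem_cons_of_mem hμ)
    have ha : ‖a‖ ≤ ε := ht a (Multiset.mem_cons_self a s)
    have hP := norm_prod_one_add_sub_one_le hε₀ hε₁ s hs'
    set P := (s.map (1 + ·)).prod
    rw [Multiset.map_cons, Multiset.prod_cons, Multiset.sum_cons, Multiset.card_cons, pow_succ,
      show (1 + a) * P - 1 - (a + s.sum) = (P - 1 - s.sum) + a * (P - 1) by ring]
    calc ‖(P - 1 - s.sum) + a * (P - 1)‖ ≤ ‖P - 1 - s.sum‖ + ‖a‖ * ‖P - 1‖ :=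
          norm_add_le_of_le le_rfl (norm_mul_le _ _)
      _ ≤ (2 ^ Multiset.card s - 1) * ε ^ 2 + ε * ((2 ^ Multiset.card s - 1) * ε) := by
          gcongr
          exact ih hs'
      _ ≤ (2 ^ Multiset.card s * 2 - 1) * ε ^ 2 := by nlinarith [sq_nonneg ε]

theorem norm_sum_le_of_prod_one_add_eq_one (hε₀ : 0 ≤ ε) (t : Multiset R)
    (ht : ∀ μ ∈ t, ‖μ‖ ≤ ε) (hprod : (t.map (1 + ·)).prod = 1) :
    ‖t.sum‖ ≤ 2 ^ Multiset.card t * ε ^ 2 := by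
  rcases le_or_gt ε 1 with hε₁ | hε₁
  · have h := norm_prod_one_add_sub_one_sub_sum_le hε₀ hε₁ t ht
    rw [hprod, sub_self, zero_sub, norm_neg] at h
    nlinarith [sq_nonneg ε]
  · calc ‖t.sum‖ ≤ Multiset.card t * ε := by
          refine (norm_multiset_sum_le t).trans ?_
          simpa using Multiset.sum_le_card_nsmul (t.map (‖·‖)) ε (by simpa using ht)
        _ ≤ 2 ^ Multiset.card t * ε ^ 2 := by
          gcongr
          · exact_mod_cast (Nat.lt_two_pow_self).le
          · nlinarith

end OneAddProd

theorem Matrix.norm_sub_one_le_of_mem_roots_charpoly {𝕜 n : Type*} [RCLike 𝕜] [Fintype n]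
    [DecidableEq n] {A : Matrix n n 𝕜} {x : 𝕜} (hx : x ∈ A.charpoly.roots) :
    ‖x - 1‖ ≤ ‖A - 1‖ := by
  have hroot : A.charpoly.IsRoot x := Polynomial.isRoot_of_mem_roots hx
  have : Nonempty n := by
    by_contra h
    rw [not_nonempty_iff] at h
    simp [Matrix.charpoly, Matrix.det_isEmpty] at hroot
  have hmem : x - 1 ∈ spectrum 𝕜 (A - 1) := by
    have h := Set.sub_mem_sub (mem_spectrum_of_isRoot_charpoly hroot) (Set.mem_singleton (1 : 𝕜))
    rwa [spectrum.sub_singleton_eq, map_one] at h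
  exact spectrum.norm_le_norm_of_mem hmem

/-- If `det M = 1` then `|Tr M − d| ≤ (2^d + d!)·‖M − I‖²` (operator norm). -/
theorem stmt_2 (d : ℕ) (M : Matrix (Fin d) (Fin d) ℂ) (hM : M.det = 1) :
    ‖M.trace - (d : ℂ)‖ ≤ ((2 : ℝ) ^ d + (d.factorial : ℝ)) * ‖M - 1‖ ^ 2 := by
  set t := M.charpoly.roots.map (· - 1)
  have hroots : Multiset.card M.charpoly.roots = d := by
    simp [IsAlgClosed.card_roots_eq_natDegree, charpoly_natDegree_eq_dim]
  have hsum : t.sum = M.trace - d := by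
    simp [t, Multiset.sum_map_sub, trace_eq_sum_roots_charpoly, hroots]
  have hprod : (t.map (1 + ·)).prod = 1 := by
    simp [t, Multiset.map_map, ← det_eq_prod_roots_charpoly, hM]
  have hbound : ∀ μ ∈ t, ‖μ‖ ≤ ‖M - 1‖ := by
    simpa only [t, Multiset.forall_mem_map_iff] using
      fun x hx => norm_sub_one_le_of_mem_roots_charpoly hx
  calc ‖M.trace - (d : ℂ)‖ = ‖t.sum‖ := by rw [hsum]
    _ ≤ 2 ^ d * ‖M - 1‖ ^ 2 := by
      simpa [t, hroots] using norm_sum_le_of_prod_one_add_eq_one (norm_nonneg _) t hbound hprod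
    _ ≤ (2 ^ d + d.factorial) * ‖M - 1‖ ^ 2 := by
      gcongr
      exact le_add_of_nonneg_right (Nat.cast_nonneg _)
end

section
/- Let G be a finite group with an irreducible unitary representation ρ of dimension d ≥ 2, fix ε₀ := 1/(6|G|(d−1)! + 2|G|²), and define f(W) := ∏_{g∈G} ρ(g) W ρ(g)† (product in some fixed order ending with the identity element). If W ∈ SU(d) satisfies ‖W − I‖ ≤ ε₀, then ‖f(W) − I‖ ≤ (3|G|(d−1)! + |G|²) · ‖W − I‖² ≤ ε₀/2. -/
open Matrix
open scoped Matrix.Norms.L2Operator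

/-!
Write `W = 1 + E` and `A g = ρ g * E * (ρ g)ᴴ`, so that `‖A g‖ = ‖E‖`. Expanding the product,
`f W - 1 = ∑ g, A g + O((|G| ‖E‖)²)`. The sum `∑ g, A g` commutes with every `ρ h`, so by
irreducibility it is a scalar `c • 1`, and comparing traces gives `c d = |G| tr E`.
Finally `det (1 + E) = 1` makes `tr E` quadratically small: the eigenvalues `λᵢ` of `E` satisfy
`|λᵢ| ≤ ‖E‖` and `∏ (1 + λᵢ) = 1`, hence `|∑ λᵢ| ≤ (d ‖E‖)²`.
-/

theorem one_add_pow_sub_one_sub_mul_le {ε : ℝ} (hε : 0 ≤ ε) {n : ℕ} (hnε : n * ε ≤ 1) :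
    (1 + ε) ^ n - 1 - n * ε ≤ (n * ε) ^ 2 := by
  have hexp : (1 + ε) ^ n ≤ Real.exp (n * ε) := by
    rw [Real.exp_nat_mul]
    exact pow_le_pow_left₀ (by linarith) (by linarith [Real.add_one_le_exp ε]) n
  have hquad := Real.abs_exp_sub_one_sub_id_le (x := n * ε)
    (by rwa [abs_of_nonneg (by positivity)])
  linarith [le_abs_self (Real.exp (n * ε) - 1 - n * ε)]

section NormedRing

variable {R : Type*} [NormedRing R] [NormOneClass R] {ε : ℝ}

theorem List.norm_prod_one_add_sub_one_le :
    ∀ {L : List R}, (∀ a ∈ L, ‖a‖ ≤ ε) →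
      ‖(L.map (1 + ·)).prod - 1‖ ≤ (1 + ε) ^ L.length - 1
  | [], _ => by simp
  | a :: L, h => by
    have ha : ‖a‖ ≤ ε := h a List.mem_cons_self
    have hL := norm_prod_one_add_sub_one_le fun b hb => h b (List.mem_cons_of_mem _ hb)
    set Q := (L.map (1 + ·)).prod
    have hε : 0 ≤ ε := (norm_nonneg a).trans ha
    have hQ : ‖Q‖ ≤ (1 + ε) ^ L.length := by
      linarith [norm_le_norm_sub_add Q 1, norm_one (α := R)]
    calc ‖(1 + a) * Q - 1‖ = ‖(Q - 1) + a * Q‖ := by noncomm_ring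
      _ ≤ ‖Q - 1‖ + ‖a‖ * ‖Q‖ := (norm_add_le _ _).trans (by gcongr; exact norm_mul_le _ _)
      _ ≤ ((1 + ε) ^ L.length - 1) + ε * (1 + ε) ^ L.length := by gcongr
      _ = (1 + ε) ^ (a :: L).length - 1 := by simp only [List.length_cons]; ring

theorem List.norm_prod_one_add_sub_one_add_sum_le :
    ∀ {L : List R}, (∀ a ∈ L, ‖a‖ ≤ ε) →
      ‖(L.map (1 + ·)).prod - (1 + L.sum)‖ ≤ (1 + ε) ^ L.length - 1 - L.length * ε
  | [], _ => by simp
  | a :: L, h => by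
    have ha : ‖a‖ ≤ ε := h a List.mem_cons_self
    have hL' : ∀ b ∈ L, ‖b‖ ≤ ε := fun b hb => h b (List.mem_cons_of_mem _ hb)
    have hL := norm_prod_one_add_sub_one_add_sum_le hL'
    have hQ := norm_prod_one_add_sub_one_le hL'
    set Q := (L.map (1 + ·)).prod
    calc ‖(1 + a) * Q - (1 + (a + L.sum))‖ = ‖(Q - (1 + L.sum)) + a * (Q - 1)‖ := by
          noncomm_ring
      _ ≤ ‖Q - (1 + L.sum)‖ + ‖a‖ * ‖Q - 1‖ :=
          (norm_add_le _ _).trans (by gcongr; exact norm_mul_le _ _)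
      _ ≤ ((1 + ε) ^ L.length - 1 - L.length * ε) + ε * ((1 + ε) ^ L.length - 1) := by
          have hε : 0 ≤ ε := (norm_nonneg a).trans ha
          gcongr
      _ = (1 + ε) ^ (a :: L).length - 1 - (a :: L).length * ε := by
          simp only [List.length_cons]; push_cast; ring

end NormedRing

theorem commute_sum_conj_unitary {G R : Type*} [Group G] [Fintype G] [Ring R] [StarMul R]
    (ρ : G →* unitary R) (x : R) (h : G) :
    Commute (ρ h : R) (∑ g, ρ g * x * star (ρ g : R)) := by
  have hconj : ∀ g, (ρ h : R) * (ρ g * x * star (ρ g : R))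
      = ρ (h * g) * x * star (ρ (h * g) : R) * ρ h := by
    intro g
    simp only [map_mul, Submonoid.coe_mul, star_mul, mul_assoc,
      Unitary.star_mul_self_of_mem (ρ h).2, mul_one]
  simp only [Commute, SemiconjBy, Finset.mul_sum, Finset.sum_mul, hconj]
  exact Fintype.sum_equiv (Equiv.mulLeft h) _ _ fun g => rfl

namespace Matrix

variable {n : Type*} [Fintype n] [DecidableEq n] [Nonempty n]

theorem norm_sub_one_le_of_isRoot_charpoly (A : Matrix n n ℂ) {μ : ℂ}
    (hμ : A.charpoly.IsRoot μ) : ‖μ - 1‖ ≤ ‖A - 1‖ := by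
  refine spectrum.norm_le_norm_of_mem ?_
  rw [← map_one (algebraMap ℂ (Matrix n n ℂ)), ← spectrum.sub_singleton_eq]
  exact Set.sub_mem_sub (mem_spectrum_of_isRoot_charpoly hμ) rfl

theorem norm_trace_sub_one_le_of_det_eq_one {A : Matrix n n ℂ} (hA : A.det = 1) :
    ‖(A - 1).trace‖ ≤ (1 + ‖A - 1‖) ^ Fintype.card n - 1 - Fintype.card n * ‖A - 1‖ := by
  set s := A.charpoly.roots
  have hcard : s.toList.length = Fintype.card n := by
    rw [Multiset.length_toList, IsAlgClosed.card_roots_eq_natDegree, charpoly_natDegree_eq_dim]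
  have hbound := List.norm_prod_one_add_sub_one_add_sum_le (L := s.toList.map (· - 1))
    (ε := ‖A - 1‖) (by
      simp only [List.mem_map, Multiset.mem_toList]
      rintro _ ⟨μ, hμ, rfl⟩
      exact A.norm_sub_one_le_of_isRoot_charpoly (Polynomial.isRoot_of_mem_roots hμ))
  have hprod : ((s.toList.map (· - 1)).map (1 + ·)).prod = 1 := by
    simpa [Function.comp_def, s, ← det_eq_prod_roots_charpoly]
  have hsum : (s.toList.map (· - 1)).sum = (A - 1).trace := by
    simp [s, ← trace_eq_sum_roots_charpoly, ← hcard, trace_sub]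
  rwa [hprod, hsum, sub_add_cancel_left, norm_neg, List.length_map, hcard] at hbound

variable {G : Type*} [Group G] [Fintype G]

theorem norm_sum_conj_unitary_sub_one_le (ρ : G →* unitary (Matrix n n ℂ))
    (hirr : ∀ N : Matrix n n ℂ, (∀ g : G, (ρ g : Matrix n n ℂ) * N = N * ρ g) →
      ∃ c : ℂ, N = c • 1)
    {W : Matrix n n ℂ} (hW : W.det = 1) (hWI : Fintype.card n * ‖W - 1‖ ≤ 1) :
    ‖∑ g, (ρ g : Matrix n n ℂ) * (W - 1) * star (ρ g : Matrix n n ℂ)‖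
      ≤ Fintype.card G * Fintype.card n * ‖W - 1‖ ^ 2 := by
  set S := ∑ g, (ρ g : Matrix n n ℂ) * (W - 1) * star (ρ g : Matrix n n ℂ)
  obtain ⟨c, hc⟩ := hirr S fun h => commute_sum_conj_unitary ρ (W - 1) h
  have htrace : c * Fintype.card n = Fintype.card G * (W - 1).trace := by
    have : S.trace = Fintype.card G * (W - 1).trace := by
      simp only [S, trace_sum, trace_mul_cycle _ (W - 1), Unitary.star_mul_self_of_mem (ρ _).2,
        one_mul, Finset.sum_const, Finset.card_univ, nsmul_eq_mul]
    simpa [hc] using this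
  have hcn : ‖c‖ * Fintype.card n ≤ Fintype.card G * (Fintype.card n * ‖W - 1‖) ^ 2 := by
    have := congrArg norm htrace
    simp only [norm_mul, Complex.norm_natCast] at this
    rw [this]
    gcongr
    exact (norm_trace_sub_one_le_of_det_eq_one hW).trans
      (one_add_pow_sub_one_sub_mul_le (norm_nonneg _) hWI)
  calc ‖S‖ = ‖c‖ := by rw [hc, norm_smul, norm_one, mul_one]
    _ ≤ _ := by
      rw [← mul_le_mul_iff_left₀ (show (0 : ℝ) < Fintype.card n by simp [Fintype.card_pos])]
      linarith

theorem norm_list_prod_conj_unitary_sub_one_le (ρ : G →* unitary (Matrix n n ℂ))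
    (hirr : ∀ N : Matrix n n ℂ, (∀ g : G, (ρ g : Matrix n n ℂ) * N = N * ρ g) →
      ∃ c : ℂ, N = c • 1)
    {l : List G} (hnodup : l.Nodup) (hall : ∀ g, g ∈ l)
    {W : Matrix n n ℂ} (hW : W.det = 1) (hGW : Fintype.card G * ‖W - 1‖ ≤ 1)
    (hnW : Fintype.card n * ‖W - 1‖ ≤ 1) :
    ‖(l.map fun g => (ρ g : Matrix n n ℂ) * W * star (ρ g : Matrix n n ℂ)).prod - 1‖
      ≤ (Fintype.card G * Fintype.card n + Fintype.card G ^ 2) * ‖W - 1‖ ^ 2 := by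
  classical
  set A : G → Matrix n n ℂ := fun g => ρ g * (W - 1) * star (ρ g : Matrix n n ℂ)
  have hmap : (l.map fun g => (ρ g : Matrix n n ℂ) * W * star (ρ g : Matrix n n ℂ))
      = (l.map A).map (1 + ·) := by
    simp only [List.map_map]
    refine List.map_congr_left fun g _ => ?_
    simp [A, mul_sub, sub_mul]
  have hA : ∀ a ∈ l.map A, ‖a‖ ≤ ‖W - 1‖ := by
    simp only [List.mem_map]
    rintro _ ⟨g, -, rfl⟩
    show ‖(ρ g : Matrix n n ℂ) * (W - 1) * star (ρ g : Matrix n n ℂ)‖ ≤ _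
    rw [← Unitary.coe_star, CStarRing.norm_mul_coe_unitary, CStarRing.norm_coe_unitary_mul]
  have huniv : l.toFinset = Finset.univ :=
    Finset.eq_univ_of_forall fun g => List.mem_toFinset.2 (hall g)
  have hsum : (l.map A).sum = ∑ g, A g := by rw [← List.sum_toFinset A hnodup, huniv]
  have hlen : (l.map A).length = Fintype.card G := by
    rw [List.length_map, ← List.toFinset_card_of_nodup hnodup, huniv, Finset.card_univ]
  have hprod := List.norm_prod_one_add_sub_one_add_sum_le hA
  rw [hsum, hlen] at hprod
  rw [hmap]
  calc ‖((l.map A).map (1 + ·)).prod - 1‖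
      ≤ ‖((l.map A).map (1 + ·)).prod - (1 + ∑ g, A g)‖ + ‖∑ g, A g‖ := by
        simpa only [add_sub_cancel_left] using
          norm_sub_le_norm_sub_add_norm_sub _ (1 + ∑ g, A g) 1
    _ ≤ (Fintype.card G * ‖W - 1‖) ^ 2 + Fintype.card G * Fintype.card n * ‖W - 1‖ ^ 2 :=
        add_le_add (hprod.trans (one_add_pow_sub_one_sub_mul_le (norm_nonneg _) hGW))
          (norm_sum_conj_unitary_sub_one_le ρ hirr hW hnW)
    _ = _ := by ring

end Matrix

theorem Nat.le_three_mul_factorial_sub_one (d : ℕ) : d ≤ 3 * (d - 1).factorial := by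
  have := Nat.self_le_factorial (d - 1)
  have := Nat.factorial_pos (d - 1)
  omega

theorem stmt_5_general (d : ℕ) (hd : 2 ≤ d) (G : Type*) [Group G] [Fintype G]
    (ρ : G →* Matrix.specialUnitaryGroup (Fin d) ℂ)
    (hirr : ∀ N : Matrix (Fin d) (Fin d) ℂ,
      (∀ g : G, (ρ g : Matrix (Fin d) (Fin d) ℂ) * N = N * ρ g) → ∃ c : ℂ, N = c • 1)
    (l : List G) (hnodup : l.Nodup) (hall : ∀ g : G, g ∈ l)
    (ε₀ : ℝ)
    (hε₀ : ε₀ = 1 / (6 * (Fintype.card G : ℝ) * ((d - 1).factorial : ℝ)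
        + 2 * (Fintype.card G : ℝ) ^ 2))
    (W : Matrix (Fin d) (Fin d) ℂ) (hW : W ∈ Matrix.specialUnitaryGroup (Fin d) ℂ)
    (hWI : ‖W - 1‖ ≤ ε₀) :
    ‖(l.map (fun g => (ρ g : Matrix (Fin d) (Fin d) ℂ) * W
        * (ρ g : Matrix (Fin d) (Fin d) ℂ)ᴴ)).prod - 1‖
      ≤ (3 * (Fintype.card G : ℝ) * ((d - 1).factorial : ℝ)
          + (Fintype.card G : ℝ) ^ 2) * ‖W - 1‖ ^ 2
    ∧ (3 * (Fintype.card G : ℝ) * ((d - 1).factorial : ℝ)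
          + (Fintype.card G : ℝ) ^ 2) * ‖W - 1‖ ^ 2 ≤ ε₀ / 2 := by
  have : Nonempty (Fin d) := ⟨⟨0, by omega⟩⟩
  set N : ℝ := (Fintype.card G : ℝ)
  set F : ℝ := ((d - 1).factorial : ℝ)
  set ε := ‖W - 1‖
  have hN : 1 ≤ N := by simp [N, Nat.one_le_iff_ne_zero]
  have hF : 0 ≤ F := by positivity
  have hdF : (d : ℝ) ≤ 3 * F := by
    simp only [F]; exact_mod_cast Nat.le_three_mul_factorial_sub_one d
  have hε : 0 ≤ ε := norm_nonneg _
  have hεK : ε * (2 * (3 * N * F + N ^ 2)) ≤ 1 := by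
    rwa [hε₀, show 6 * N * F + 2 * N ^ 2 = 2 * (3 * N * F + N ^ 2) by ring,
      le_div_iff₀ (by positivity)] at hWI
  have hGW : N * ε ≤ 1 := by nlinarith
  have hdW : (d : ℝ) * ε ≤ 1 := by
    nlinarith [mul_le_mul_of_nonneg_right hdF hε, mul_nonneg (sub_nonneg.2 hN) (mul_nonneg hF hε)]
  have hbound := norm_list_prod_conj_unitary_sub_one_le
    ((Submonoid.inclusion specialUnitaryGroup_le_unitaryGroup).comp ρ) hirr hnodup hall hW.2
    hGW (by simpa using hdW)
  rw [Fintype.card_fin] at hbound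
  refine ⟨hbound.trans (by gcongr ?_ * _; nlinarith), ?_⟩
  nlinarith [mul_le_mul_of_nonneg_right hεK hε]

/-- Quadratic error reduction for the group-averaging map `f(W) = ∏_g ρ(g) W ρ(g)†`
(product in a fixed order ending with the identity element of `G`), for an
irreducible special-unitary representation of a finite group with `d ≥ 2`. -/
theorem stmt_5 (d : ℕ) (hd : 2 ≤ d) (G : Type*) [Group G] [Fintype G]
    (ρ : G →* Matrix.specialUnitaryGroup (Fin d) ℂ)
    (hirr : ∀ N : Matrix (Fin d) (Fin d) ℂ,
      (∀ g : G, (ρ g : Matrix (Fin d) (Fin d) ℂ) * N = N * ρ g) → ∃ c : ℂ, N = c • 1)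
    (l : List G) (hnodup : l.Nodup) (hall : ∀ g : G, g ∈ l) (hlast : l.getLast? = some 1)
    (ε₀ : ℝ)
    (hε₀ : ε₀ = 1 / (6 * (Fintype.card G : ℝ) * ((d - 1).factorial : ℝ)
        + 2 * (Fintype.card G : ℝ) ^ 2))
    (W : Matrix (Fin d) (Fin d) ℂ) (hW : W ∈ Matrix.specialUnitaryGroup (Fin d) ℂ)
    (hWI : ‖W - 1‖ ≤ ε₀) :
    ‖(l.map (fun g => (ρ g : Matrix (Fin d) (Fin d) ℂ) * W
        * (ρ g : Matrix (Fin d) (Fin d) ℂ)ᴴ)).prod - 1‖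
      ≤ (3 * (Fintype.card G : ℝ) * ((d - 1).factorial : ℝ)
          + (Fintype.card G : ℝ) ^ 2) * ‖W - 1‖ ^ 2
    ∧ (3 * (Fintype.card G : ℝ) * ((d - 1).factorial : ℝ)
          + (Fintype.card G : ℝ) ^ 2) * ‖W - 1‖ ^ 2 ≤ ε₀ / 2 :=
  stmt_5_general d hd G ρ hirr l hnodup hall ε₀ hε₀ W hW hWI
end
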